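/- arXiv:2206.03458 — 4 statements merged into one kernel-verified Lean document; each statement's English description precedes it below -/
import Mathlib

section
/- With f_c defined by f_c(u,1) = f_c(1,u) = x_c u and f_c(x_a u, x_b v) = x_c f_a(u, x_b v) + x_c f_b(x_a u, v) - f_{c+a+b}(u, v), one has x_a u ⋄ x_b v = f_a(u, x_b v) + f_b(x_a u, v) for all u, v in X. -/
noncomputable section
namespace BlockShuffle

/-- The underlying vector space of `𝔛 = ℚ⟨x₁, x₂, …⟩`, with words as basis. -/
abbrev XX : Type := List ℕ →₀ ℚ

/-- The basis word `x_{a₁} ⋯ x_{a_d}`. -/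
def wX (w : List ℕ) : XX := Finsupp.single w 1

/-- Left multiplication by the generator `x_a`. -/
def consX (a : ℕ) : XX →ₗ[ℚ] XX := Finsupp.lmapDomain ℚ ℚ (List.cons a)

/-- Left multiplication by the word `x_{a₁} ⋯ x_{a_d}`. -/
def consListX (w : List ℕ) : XX →ₗ[ℚ] XX := Finsupp.lmapDomain ℚ ℚ (w ++ ·)

/-- The shift operator `s_k` with `s_k(x_i w) = x_{i+k} w`, `s_k(1) = 0`. -/
def shiftX (k : ℕ) : XX →ₗ[ℚ] XX :=
  Finsupp.lsum ℚ fun w => LinearMap.toSpanSingleton ℚ XX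
    (match w with
     | [] => 0
     | i :: t => Finsupp.single ((i + k) :: t) (1 : ℚ))

/-- The block shuffle product `⋄` on basis words. -/
def dshW : List ℕ → List ℕ → XX
  | [], v => wX v
  | u, [] => wX u
  | a :: u, b :: v =>
      consX a (dshW u (b :: v)) + consX b (dshW (a :: u) v) - shiftX (a + b) (dshW u v)
  termination_by u v => u.length + v.length

/-- The block shuffle product `⋄ : 𝔛 × 𝔛 → 𝔛`, as a bilinear map. -/
def dshL : XX →ₗ[ℚ] XX →ₗ[ℚ] XX :=
  Finsupp.lsum ℚ fun u => LinearMap.toSpanSingleton ℚ (XX →ₗ[ℚ] XX)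
    (Finsupp.lsum ℚ fun v => LinearMap.toSpanSingleton ℚ XX (dshW u v))

/-- The maps `f_c` on basis words. -/
def fW : ℕ → List ℕ → List ℕ → XX
  | c, [], v => wX (c :: v)
  | c, u, [] => wX (c :: u)
  | c, a :: u, b :: v =>
      consX c (fW a u (b :: v)) + consX c (fW b (a :: u) v) - fW (c + a + b) u v
  termination_by _ u v => u.length + v.length

/-- The bilinear maps `f_c : 𝔛 × 𝔛 → 𝔛`. -/
def fL (c : ℕ) : XX →ₗ[ℚ] XX →ₗ[ℚ] XX :=
  Finsupp.lsum ℚ fun u => LinearMap.toSpanSingleton ℚ (XX →ₗ[ℚ] XX)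
    (Finsupp.lsum ℚ fun v => LinearMap.toSpanSingleton ℚ XX (fW c u v))

/-- The anti-automorphism `S` of `𝔛` with `S(x_k) = -x_k`. -/
def SX : XX →ₗ[ℚ] XX :=
  Finsupp.lsum ℚ fun w => LinearMap.toSpanSingleton ℚ XX (((-1 : ℚ) ^ w.length) • wX w.reverse)

/-- The subspace `𝔛⁺ ⋄ 𝔛⁺` spanned by block shuffle products of nonconstant elements. -/
def diamondSpan : Submodule ℚ XX :=
  Submodule.span ℚ
    {x | ∃ u v : List ℕ, u ≠ [] ∧ v ≠ [] ∧ (∀ i ∈ u, 1 ≤ i) ∧ (∀ i ∈ v, 1 ≤ i) ∧ x = dshW u v}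


lemma consX_single (a : ℕ) (w : List ℕ) (r : ℚ) :
    consX a (Finsupp.single w r) = Finsupp.single (a :: w) r := by
  simp [consX, Finsupp.lmapDomain_apply, Finsupp.mapDomain_single]

lemma shiftX_single_cons (c i : ℕ) (t : List ℕ) (r : ℚ) :
    shiftX c (Finsupp.single (i :: t) r) = Finsupp.single ((i + c) :: t) r := by
  simp [shiftX, Finsupp.lsum_single, LinearMap.toSpanSingleton_apply, Finsupp.smul_single]

lemma shiftX_single_nil (c : ℕ) (r : ℚ) :
    shiftX c (Finsupp.single ([] : List ℕ) r) = 0 := by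
  simp [shiftX, Finsupp.lsum_single, LinearMap.toSpanSingleton_apply]

lemma shift_consX (c a : ℕ) (x : XX) : shiftX c (consX a x) = consX (a + c) x := by
  induction x using Finsupp.induction_linear with
  | zero => simp
  | add f g hf hg => simp [map_add, hf, hg]
  | single w r => rw [consX_single, shiftX_single_cons, consX_single]

lemma shift_shiftX (c k : ℕ) (x : XX) : shiftX c (shiftX k x) = shiftX (k + c) x := by
  induction x using Finsupp.induction_linear with
  | zero => simp
  | add f g hf hg => simp [map_add, hf, hg]
  | single w r =>
    cases w with
    | nil => rw [shiftX_single_nil, shiftX_single_nil, map_zero]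
    | cons i t => rw [shiftX_single_cons, shiftX_single_cons, shiftX_single_cons, Nat.add_assoc]

lemma shift_fW (s : ℕ) : ∀ (n k : ℕ) (u v : List ℕ), u.length + v.length = n →
    shiftX s (fW k u v) = fW (k + s) u v := by
  intro n
  induction n using Nat.strong_induction_on with
  | _ n ih =>
    intro k u v hn
    match u, v with
    | [], v => simp [fW, wX, shiftX_single_cons]
    | a :: u, [] => simp [fW, wX, shiftX_single_cons]
    | a :: u, b :: v =>
      rw [fW, map_sub, map_add, shift_consX, shift_consX,
        ih (u.length + v.length) (by simp at hn; omega) _ u v rfl, fW]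
      congr 2
      omega

lemma shift0_dshW (a b : ℕ) (u v : List ℕ) :
    shiftX 0 (dshW (a :: u) (b :: v)) = dshW (a :: u) (b :: v) := by
  rw [dshW, map_sub, map_add, shift_consX, shift_consX, shift_shiftX]
  simp

lemma dshW_nil_left (v : List ℕ) : dshW [] v = wX v := by rw [dshW]

lemma dshW_nil_right (u : List ℕ) : dshW u [] = wX u := by
  cases u with
  | nil => rw [dshW]
  | cons a u => simp [dshW]

lemma fW_nil_left (k : ℕ) (v : List ℕ) : fW k [] v = wX (k :: v) := by rw [fW]

lemma fW_nil_right (k : ℕ) (u : List ℕ) : fW k u [] = wX (k :: u) := by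
  cases u with
  | nil => rw [fW]
  | cons a u => simp [fW]

lemma BC : ∀ n : ℕ,
    (∀ (c a b : ℕ) (u v : List ℕ), u.length + v.length = n →
      shiftX c (dshW (a :: u) (b :: v)) = fW (a + c) u (b :: v) + fW (b + c) (a :: u) v) ∧
    (∀ (k a b : ℕ) (u v : List ℕ), u.length + v.length = n →
      fW k (a :: u) (b :: v)
        = consX k (dshW (a :: u) (b :: v)) - shiftX k (fW (a + b) u v)) := by
  intro n
  induction n using Nat.strong_induction_on with
  | _ n ih =>
    have B : ∀ (c a b : ℕ) (u v : List ℕ), u.length + v.length = n →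
        shiftX c (dshW (a :: u) (b :: v)) = fW (a + c) u (b :: v) + fW (b + c) (a :: u) v := by
      intro c a b u v hn
      rw [dshW, map_sub, map_add, shift_consX, shift_consX, shift_shiftX]
      match u, v with
      | [], [] =>
        simp only [dshW_nil_left, dshW_nil_right, fW_nil_left, fW_nil_right, wX,
          consX_single, shiftX_single_nil, shiftX_single_cons]
        abel
      | [], d :: v' =>
        have hC := (ih (0 + v'.length) (by simp at hn; omega)).2 (b + c) a d [] v' rfl
        rw [hC]
        simp only [dshW_nil_left, fW_nil_left, wX, consX_single, shiftX_single_cons]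
        rw [show d + (a + b + c) = a + d + (b + c) by omega]
        abel
      | a' :: u', [] =>
        have hC := (ih (u'.length + 0) (by simp at hn; omega)).2 (a + c) a' b u' [] rfl
        rw [hC]
        simp only [dshW_nil_right, fW_nil_right, wX, consX_single, shiftX_single_cons]
        rw [show a' + (a + b + c) = a' + b + (a + c) by omega]
        abel
      | a' :: u', d :: v' =>
        simp only [List.length_cons] at hn
        have hC1 := (ih (u'.length + (d :: v').length)
          (by simp; omega)).2 (a + c) a' b u' (d :: v') rfl
        have hC2 := (ih ((a' :: u').length + v'.length)
          (by simp; omega)).2 (b + c) a d (a' :: u') v' rfl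
        have hB := (ih (u'.length + v'.length) (by omega)).1 (a + b + c) a' d u' v' rfl
        rw [hC1, hC2, hB, shift_fW _ _ _ u' (d :: v') rfl, shift_fW _ _ _ (a' :: u') v' rfl]
        rw [show a' + (a + b + c) = a' + b + (a + c) by omega,
          show d + (a + b + c) = a + d + (b + c) by omega]
        abel
    refine ⟨B, ?_⟩
    intro k a b u v hn
    have hA : dshW (a :: u) (b :: v) = fW a u (b :: v) + fW b (a :: u) v := by
      have := B 0 a b u v hn
      rw [shift0_dshW] at this
      simpa using this
    rw [fW, hA, shift_fW _ _ _ u v rfl, map_add]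
    rw [show a + b + k = k + a + b by omega]

lemma dshW_cons (a b : ℕ) (u v : List ℕ) :
    dshW (a :: u) (b :: v) = fW a u (b :: v) + fW b (a :: u) v := by
  have := (BC (u.length + v.length)).1 0 a b u v rfl
  rw [shift0_dshW] at this
  simpa using this

lemma dshL_single_single (u v : List ℕ) (r s : ℚ) :
    dshL (Finsupp.single u r) (Finsupp.single v s) = (r * s) • dshW u v := by
  simp [dshL, Finsupp.lsum_single, LinearMap.toSpanSingleton_apply, smul_smul, mul_comm]

lemma fL_single_single (c : ℕ) (u v : List ℕ) (r s : ℚ) :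
    fL c (Finsupp.single u r) (Finsupp.single v s) = (r * s) • fW c u v := by
  simp [fL, Finsupp.lsum_single, LinearMap.toSpanSingleton_apply, smul_smul, mul_comm]

/-- `x_a u ⋄ x_b v = f_a(u, x_b v) + f_b(x_a u, v)`. -/
theorem dsh_eq_f (a b : ℕ) (ha : 1 ≤ a) (hb : 1 ≤ b) (u v : XX) :
    dshL (consX a u) (consX b v) = fL a u (consX b v) + fL b (consX a u) v := by
  induction u using Finsupp.induction_linear with
  | zero => simp
  | add f g hf hg =>
    simp only [map_add, LinearMap.add_apply] at hf hg ⊢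
    rw [hf, hg]; abel
  | single w r =>
    induction v using Finsupp.induction_linear with
    | zero => simp
    | add f g hf hg =>
      simp only [map_add, LinearMap.add_apply] at hf hg ⊢
      rw [hf, hg]; abel
    | single w' r' =>
      rw [consX_single, consX_single, dshL_single_single, fL_single_single,
        fL_single_single, dshW_cons, smul_add]


end BlockShuffle
end
end

section
/- For n ≥ 1 and positive integers a_1, ..., a_{n+1}, b_1, ..., b_n, the alternating sum over all permutations σ of {1,...,n+1} of sgn(σ)·f_{b_1}(x_{a_{σ(1)}}, x_{a_{σ(2)}} x_{b_2} x_{a_{σ(3)}} x_{b_3} ⋯ x_{a_{σ(n)}} x_{b_n} x_{a_{σ(n+1)}}) equals 0. -/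
noncomputable section
namespace BlockShuffle

/-- The interleaved word `x_{a₁} x_{b₁} x_{a₂} x_{b₂} ⋯`. -/
def interleaveW : List ℕ → List ℕ → List ℕ
  | a :: as, b :: bs => a :: b :: interleaveW as bs
  | as, [] => as
  | [], _ => []

lemma fL_wX (c : ℕ) (u v : List ℕ) : fL c (wX u) (wX v) = fW c u v := by
  simp [fL, wX, Finsupp.lsum_single, LinearMap.toSpanSingleton_apply]

lemma consX_wX (a : ℕ) (w : List ℕ) : consX a (wX w) = wX (a :: w) := by
  simp [consX, wX, Finsupp.lmapDomain_apply, Finsupp.mapDomain_single]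
lemma fW_nil (c : ℕ) (v : List ℕ) : fW c [] v = wX (c :: v) := by rw [fW]
lemma fW_cons_nil (c a : ℕ) (u : List ℕ) : fW c (a :: u) [] = wX (c :: a :: u) := by
  rw [fW]; simp
lemma fW_cons_cons (c a b : ℕ) (u v : List ℕ) :
    fW c (a :: u) (b :: v) =
      consX c (fW a u (b :: v)) + consX c (fW b (a :: u) v) - fW (c + a + b) u v := by
  rw [fW]

/-- the `i`-th symmetric piece of `fW c [p] (interleaveW qs bs)` -/
def G : ℕ → ℕ → ℕ → List ℕ → List ℕ → XX
  | 0, c, p, [q], [] => wX [c,p,q] + wX [c,q,p] - wX [c+p+q]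
  | 0, c, p, q :: qs, b :: bs =>
      wX (c::p::q::b::interleaveW qs bs) + wX (c::q::p::b::interleaveW qs bs)
        - wX ((c+p+q)::b::interleaveW qs bs) - wX (c::(q+p+b)::interleaveW qs bs)
  | i+1, c, p, q :: qs, b :: bs => consX c (consX q (G i b p qs bs))
  | _, _, _, _, _ => 0

lemma G_nil (i c p : ℕ) (bs : List ℕ) : G i c p [] bs = 0 := by
  cases i <;> rw [G] <;> simp

lemma G_succ_nil (i c p q : ℕ) (qs : List ℕ) : G (i+1) c p (q :: qs) [] = 0 := by
  rw [G] <;> simp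

lemma G_zero_two_nil (c p q q' : ℕ) (qs : List ℕ) : G 0 c p (q :: q' :: qs) [] = 0 := by
  rw [G] <;> simp

lemma G_zero_base (c p q : ℕ) : G 0 c p [q] [] = wX [c,p,q] + wX [c,q,p] - wX [c+p+q] := by
  rw [G]

lemma G_zero_cons (c p q b : ℕ) (qs bs : List ℕ) :
    G 0 c p (q :: qs) (b :: bs) =
      wX (c::p::q::b::interleaveW qs bs) + wX (c::q::p::b::interleaveW qs bs)
        - wX ((c+p+q)::b::interleaveW qs bs) - wX (c::(q+p+b)::interleaveW qs bs) := by
  rw [G]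

lemma G_succ_cons (i c p q b : ℕ) (qs bs : List ℕ) :
    G (i+1) c p (q :: qs) (b :: bs) = consX c (consX q (G i b p qs bs)) := by
  rw [G]

lemma fW_decomp : ∀ (bs qs : List ℕ) (c p : ℕ), qs.length = bs.length + 1 →
    fW c [p] (interleaveW qs bs) = ∑ i ∈ Finset.range qs.length, G i c p qs bs := by
  intro bs
  induction bs with
  | nil =>
    rintro (_ | ⟨q, (_ | ⟨q', qs⟩)⟩) c p h <;> simp at h
    show fW c [p] [q] = _
    rw [fW_cons_cons, fW_nil, fW_cons_nil, fW_nil, consX_wX, consX_wX]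
    simp [G_zero_base]
  | cons b bs ih =>
    rintro (_ | ⟨q, qs⟩) c p h <;> simp at h
    have hrest : interleaveW (q :: qs) (b :: bs) = q :: b :: interleaveW qs bs := rfl
    rw [hrest]
    simp only [fW_cons_cons, fW_nil, map_add, map_sub, consX_wX]
    rw [ih qs b p h]
    simp only [map_sum]
    simp only [List.length_cons]
    rw [Finset.sum_range_succ']
    simp only [G_succ_cons, G_zero_cons]
    abel

lemma G_swap : ∀ (i : ℕ) (qs bs : List ℕ) (c p : ℕ),
    G i c p qs bs = G i c (qs.getD i 0) (qs.set i p) bs := by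
  intro i
  induction i with
  | zero =>
    rintro (_ | ⟨q, qs⟩) bs c p
    · simp [G_nil]
    · cases bs with
      | nil =>
        cases qs with
        | nil =>
          simp only [List.getD_cons_zero, List.set_cons_zero]
          rw [G_zero_base, G_zero_base, show c + p + q = c + q + p by omega]
          abel
        | cons q' qs =>
          simp only [List.getD_cons_zero, List.set_cons_zero]
          rw [G_zero_two_nil, G_zero_two_nil]
      | cons b bs =>
        simp only [List.getD_cons_zero, List.set_cons_zero]
        rw [G_zero_cons, G_zero_cons,
          show c + p + q = c + q + p by omega, show q + p + b = p + q + b by omega]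
        abel
  | succ i ih =>
    rintro (_ | ⟨q, qs⟩) bs c p
    · simp [G_nil]
    · cases bs with
      | nil => rw [G_succ_nil, List.set_cons_succ, G_succ_nil]
      | cons b bs =>
        rw [G_succ_cons, List.set_cons_succ, List.getD_cons_succ, G_succ_cons, ih]

/-- Lemma `flem_for_alt`: the alternating sum over permutations vanishes. -/
theorem f_alt_sum (n : ℕ) (hn : 1 ≤ n) (a : Fin (n + 1) → ℕ) (b : Fin n → ℕ)
    (ha : ∀ i, 1 ≤ a i) (hb : ∀ i, 1 ≤ b i) :
    (∑ σ : Equiv.Perm (Fin (n + 1)),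
        ((Equiv.Perm.sign σ : ℤˣ) : ℤ) •
          fL (b ⟨0, hn⟩) (wX [a (σ 0)])
            (wX (interleaveW ((List.ofFn fun i => a (σ i)).drop 1) ((List.ofFn b).drop 1)))) =
      0 := by
  classical
  set c := b ⟨0, hn⟩ with hc
  set bs : List ℕ := (List.ofFn b).drop 1 with hbs
  have hbslen : bs.length = n - 1 := by simp [hbs]
  have hq : ∀ σ : Equiv.Perm (Fin (n+1)),
      (List.ofFn fun i => a (σ i)).drop 1 = List.ofFn fun j : Fin n => a (σ j.succ) := by
    intro σ; rw [List.ofFn_succ]; rfl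
  have hlen : ∀ σ : Equiv.Perm (Fin (n+1)),
      (List.ofFn fun j : Fin n => a (σ j.succ)).length = bs.length + 1 := by
    intro σ; simp [hbslen]; omega
  have hterm : ∀ σ : Equiv.Perm (Fin (n+1)),
      fL c (wX [a (σ 0)]) (wX (interleaveW ((List.ofFn fun i => a (σ i)).drop 1) bs))
        = ∑ i ∈ Finset.range n,
            G i c (a (σ 0)) (List.ofFn fun j : Fin n => a (σ j.succ)) bs := by
    intro σ
    rw [hq, fL_wX, fW_decomp bs _ c (a (σ 0)) (hlen σ), List.length_ofFn]
  calc (∑ σ : Equiv.Perm (Fin (n + 1)),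
        ((Equiv.Perm.sign σ : ℤˣ) : ℤ) •
          fL c (wX [a (σ 0)]) (wX (interleaveW ((List.ofFn fun i => a (σ i)).drop 1) bs)))
      = ∑ σ : Equiv.Perm (Fin (n + 1)), ∑ i ∈ Finset.range n,
          ((Equiv.Perm.sign σ : ℤˣ) : ℤ) •
            G i c (a (σ 0)) (List.ofFn fun j : Fin n => a (σ j.succ)) bs := by
        refine Finset.sum_congr rfl fun σ _ => ?_
        rw [hterm σ, Finset.smul_sum]
    _ = ∑ i ∈ Finset.range n, ∑ σ : Equiv.Perm (Fin (n + 1)),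
          ((Equiv.Perm.sign σ : ℤˣ) : ℤ) •
            G i c (a (σ 0)) (List.ofFn fun j : Fin n => a (σ j.succ)) bs :=
        Finset.sum_comm
    _ = 0 := ?_
  refine Finset.sum_eq_zero fun i hi => ?_
  rw [Finset.mem_range] at hi
  set k : Fin (n+1) := ⟨i+1, by omega⟩ with hk
  have hk0 : (0 : Fin (n+1)) ≠ k := by simp [hk, Fin.ext_iff]
  set s := Equiv.swap (0 : Fin (n+1)) k with hs
  set F : Equiv.Perm (Fin (n+1)) → XX := fun σ =>
    ((Equiv.Perm.sign σ : ℤˣ) : ℤ) •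
      G i c (a (σ 0)) (List.ofFn fun j : Fin n => a (σ j.succ)) bs with hF
  have key : ∀ σ, F (σ * s) = - F σ := by
    intro σ
    have hsign : ((Equiv.Perm.sign (σ * s) : ℤˣ) : ℤ)
        = -((Equiv.Perm.sign σ : ℤˣ) : ℤ) := by
      rw [hs, Equiv.Perm.sign_mul, Equiv.Perm.sign_swap hk0]
      simp
    have h0 : (σ * s) 0 = σ k := by
      simp [hs, Equiv.Perm.mul_apply, Equiv.swap_apply_left]
    have hqs : (List.ofFn fun j : Fin n => a ((σ * s) j.succ))
        = (List.ofFn fun j : Fin n => a (σ j.succ)).set i (a (σ 0)) := by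
      apply List.ext_getElem
      · simp
      intro j hj hj'
      simp only [List.length_ofFn] at hj
      rw [List.getElem_ofFn, List.getElem_set, List.getElem_ofFn]
      by_cases hji : i = j
      · subst hji
        have : (⟨i, hj⟩ : Fin n).succ = k := by
          simp [hk, Fin.ext_iff]
        simp only [this, Equiv.Perm.mul_apply, hs, Equiv.swap_apply_right]
        simp
      · have h1 : (⟨j, hj⟩ : Fin n).succ ≠ (0 : Fin (n+1)) := by
          simp [Fin.ext_iff]
        have h2 : (⟨j, hj⟩ : Fin n).succ ≠ k := by
          simp only [hk, Fin.succ_mk, ne_eq, Fin.mk.injEq]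
          omega
        simp only [Equiv.Perm.mul_apply, hs, Equiv.swap_apply_of_ne_of_ne h1 h2,
          if_neg hji]
    have hgetD : (List.ofFn fun j : Fin n => a (σ j.succ)).getD i 0 = a (σ k) := by
      rw [List.getD_eq_getElem _ _ (by simpa using hi), List.getElem_ofFn]
      congr 1
    have hG : G i c (a ((σ * s) 0)) (List.ofFn fun j : Fin n => a ((σ * s) j.succ)) bs
        = G i c (a (σ 0)) (List.ofFn fun j : Fin n => a (σ j.succ)) bs := by
      rw [h0, hqs, ← hgetD, ← G_swap]
    rw [hF]
    simp only [hsign, hG, neg_smul]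
  have h2 : (∑ σ : Equiv.Perm (Fin (n+1)), F σ)
      = -(∑ σ : Equiv.Perm (Fin (n+1)), F σ) := by
    conv_lhs => rw [← Equiv.sum_comp (Equiv.mulRight s) F]
    simp only [Equiv.coe_mulRight]
    rw [show (∑ σ : Equiv.Perm (Fin (n+1)), F (σ * s))
        = ∑ σ : Equiv.Perm (Fin (n+1)), - F σ from Finset.sum_congr rfl fun σ _ => key σ]
    rw [Finset.sum_neg_distrib]
  have h3 : (2 : ℚ) • (∑ σ : Equiv.Perm (Fin (n+1)), F σ) = 0 := by
    rw [two_smul]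
    nth_rewrite 1 [h2]
    exact neg_add_cancel _
  rcases smul_eq_zero.mp h3 with h | h
  · norm_num at h
  · exact h

end BlockShuffle
end
end

section
/- Let A = Q⟨e_z : z ∈ C⟩ and ι(z) = 1-z inducing an involution ι on A with ι(e_z) = e_{1-z}. For b ≥ 0 let U(b) = e_0 e_1 e_0 ⋯ (b letters, alternating starting with e_0) + e_1 e_0 e_1 ⋯ (b letters, alternating starting with e_1). Then for any b, b' ≥ 0 and any a ∈ C with a ∉ {0,1}, and the derivation-difference operator D_{α,β} with α ∈ {a, 1-a} and β ∈ {0,1} replaced appropriately: D_{α,β}(U(b), c, U(b')) = (-1)^b (Δ_{c,0} - Δ_{c,1}) U⁻(b+b') + (δ_{b,0} - δ_{b',0})(Δ_{c,0} + Δ_{c,1}) U(b+b'), where c ∈ {a, 1-a}, U⁻(b) = W(0;b) - W(1;b), W(t;b) = e_{ι^0(t)} e_{ι^1(t)} ⋯ e_{ι^{b-1}(t)}, and Δ_{x,y} = Δ^{α,β}_{x,y} is 1 if {α,β} ∈ {{x,y}, {1-x,1-y}} and 0 otherwise. -/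
noncomputable section
namespace BlockShuffle

/-- The algebra `𝒜 = ℚ⟨e_z : z ∈ ℂ⟩`, realized as the monoid algebra of the free
monoid of words in complex letters. -/
abbrev AA : Type := MonoidAlgebra ℚ (FreeMonoid ℂ)

/-- The basis word `e_{a₁} ⋯ e_{a_n}` of `𝒜`. -/
def wA (w : List ℂ) : AA := MonoidAlgebra.single (FreeMonoid.ofList w) 1

/-- The involution `ι(z) = 1 - z` on `ℂ`. -/
def iC : ℂ → ℂ := fun z => 1 - z

/-- The alternating word `W(t; b) = e_{ι⁰(t)} e_{ι¹(t)} ⋯ e_{ι^{b-1}(t)}`. -/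
def Wword (t : ℂ) (b : ℕ) : List ℂ := List.ofFn fun i : Fin b => iC^[(i : ℕ)] t

/-- `U(b) = W(0;b) + W(1;b)`, the sum of the two alternating words of length `b`. -/
def Uel (b : ℕ) : AA := wA (Wword 0 b) + wA (Wword 1 b)

/-- `U⁻(b) = W(0;b) - W(1;b)`. -/
def UelM (b : ℕ) : AA := wA (Wword 0 b) - wA (Wword 1 b)

/-- The `s`-fold iterate `ι^s` of the involution of `𝒜` induced by `ι(e_z) = e_{1-z}`. -/
def iAs (s : ℕ) : AA →ₗ[ℚ] AA := (MonoidAlgebra.coeffLinearEquiv ℚ).symm.toLinearMap ∘ₗ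
  Finsupp.lmapDomain ℚ ℚ (FreeMonoid.map (iC^[s])) ∘ₗ (MonoidAlgebra.coeffLinearEquiv ℚ).toLinearMap

open Classical in
/-- `Δ^{α,β}_{x,y} = 1` if `{α,β} ∈ {{x,y}, {1-x,1-y}}`, else `0`. -/
def Delta (α β x y : ℂ) : ℚ :=
  if ({α, β} : Set ℂ) = {x, y} ∨ ({α, β} : Set ℂ) = {1 - x, 1 - y} then 1 else 0

/-- `Δ^{α,β}_{a,s}` for the optional first/last letter `s` of a word (`0` if absent). -/
def hdDelta (α β a : ℂ) : Option ℂ → ℚ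
  | some s => Delta α β a s
  | none => 0

/-- The map `D_{α,β}(w₁, a, w₂)` on basis words: `Σ_s Δ^{α,β}_{a,s}(w₁ e_s w_{2,s} -
w_{1,s} e_s w₂)` where `w₂ = q₂ + Σ_s e_s w_{2,s}`, `w₁ = q₁ + Σ_s w_{1,s} e_s`. -/
def DDw (α β : ℂ) (w₁ : List ℂ) (a : ℂ) (w₂ : List ℂ) : AA :=
  (hdDelta α β a w₂.head? - hdDelta α β a w₁.getLast?) • wA (w₁ ++ w₂)

/-- The bilinear extension of `D_{α,β}(·, a, ·)`. -/
def DDL (α β a : ℂ) : AA →ₗ[ℚ] AA →ₗ[ℚ] AA :=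
  (Finsupp.lsum ℚ fun w₁ => LinearMap.toSpanSingleton ℚ (AA →ₗ[ℚ] AA)
    ((Finsupp.lsum ℚ fun w₂ =>
      LinearMap.toSpanSingleton ℚ AA (DDw α β (FreeMonoid.toList w₁) a (FreeMonoid.toList w₂))) ∘ₗ
        (MonoidAlgebra.coeffLinearEquiv ℚ : AA ≃ₗ[ℚ] _).toLinearMap)) ∘ₗ
    (MonoidAlgebra.coeffLinearEquiv ℚ : AA ≃ₗ[ℚ] _).toLinearMap



lemma DDL_single (α β a : ℂ) (w1 w2 : List ℂ) :
    DDL α β a (wA w1) (wA w2) = DDw α β w1 a w2 := by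
  simp only [DDL, wA]
  simp only [LinearMap.comp_apply, LinearEquiv.coe_toLinearMap,
    MonoidAlgebra.coeffLinearEquiv_apply, MonoidAlgebra.coeff_single]
  erw [Finsupp.lsum_single, LinearMap.toSpanSingleton_apply, one_smul]
  simp only [LinearMap.comp_apply, LinearEquiv.coe_toLinearMap,
    MonoidAlgebra.coeffLinearEquiv_apply, MonoidAlgebra.coeff_single]
  erw [Finsupp.lsum_single, LinearMap.toSpanSingleton_apply, one_smul]
  rw [FreeMonoid.toList_ofList, FreeMonoid.toList_ofList]

lemma iC_it (n : ℕ) (t : ℂ) : iC^[n] t = if Even n then t else 1 - t := by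
  induction n with
  | zero => simp
  | succ n ih =>
    rw [Function.iterate_succ_apply', ih]
    by_cases h : Even n <;> simp [h, iC, Nat.even_add_one] <;> ring

lemma Wword_succ (t : ℂ) (b : ℕ) : Wword t (b + 1) = t :: Wword (iC t) b := by
  simp only [Wword, List.ofFn_succ, Function.iterate_zero_apply, Fin.val_succ,
    Function.iterate_succ_apply, Fin.val_zero]

lemma Wword_head? (t : ℂ) (b : ℕ) : (Wword t (b + 1)).head? = some t := by
  rw [Wword_succ]; rfl

lemma Wword_getLast? (t : ℂ) (b : ℕ) :
    (Wword t (b + 1)).getLast? = some (iC^[b] t) := by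
  induction b generalizing t with
  | zero => simp [Wword_succ, Wword]
  | succ n ih =>
    rw [Wword_succ, Wword_succ, List.getLast?_cons_cons, ← Wword_succ, ih,
      ← Function.iterate_succ_apply]

lemma Wword_append (t : ℂ) (b b' : ℕ) :
    Wword t b ++ Wword (iC^[b] t) b' = Wword t (b + b') := by
  induction b generalizing t with
  | zero => simp [Wword]
  | succ n ih =>
    rw [Function.iterate_succ_apply, Wword_succ, List.cons_append, ih,
      ← Wword_succ]
    congr 1
    omega

lemma Wword_append' (t t' : ℂ) (b b' : ℕ) (h : iC^[b] t = t') :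
    Wword t b ++ Wword t' b' = Wword t (b + b') := by
  rw [← h, Wword_append]

/-- `D_{α,β}(U(b), c, U(b')) = (-1)^b (Δ_{c,0} - Δ_{c,1}) U⁻(b+b') +
(δ_{b,0} - δ_{b',0})(Δ_{c,0} + Δ_{c,1}) U(b+b')`. -/
theorem DD_U_U (b b' : ℕ) (a : ℂ) (ha0 : a ≠ 0) (ha1 : a ≠ 1)
    (c : ℂ) (hc : c = a ∨ c = 1 - a)
    (α β : ℂ) (hα : α = a ∨ α = 1 - a) (hβ : β = 0 ∨ β = 1) :
    DDL α β c (Uel b) (Uel b') =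
      ((-1 : ℚ) ^ b * (Delta α β c 0 - Delta α β c 1)) • UelM (b + b') +
        (((if b = 0 then (1 : ℚ) else 0) - (if b' = 0 then (1 : ℚ) else 0)) *
            (Delta α β c 0 + Delta α β c 1)) • Uel (b + b') := by
  clear ha0 ha1 hc hα hβ
  rcases b with _ | m <;> rcases b' with _ | n
  · simp [Uel, UelM, map_add, DDL_single, DDw, hdDelta, Wword]
  · simp only [Uel, UelM, map_add, LinearMap.add_apply, DDL_single]
    have h0 : Wword (0:ℂ) 0 = [] := rfl
    have h1 : Wword (1:ℂ) 0 = [] := rfl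
    simp only [DDw, h0, h1, List.nil_append, Wword_head?, hdDelta,
      List.getLast?_nil, sub_zero]
    norm_num
    module
  · simp only [Uel, UelM, map_add, LinearMap.add_apply, DDL_single]
    have h0 : Wword (0:ℂ) 0 = [] := rfl
    have h1 : Wword (1:ℂ) 0 = [] := rfl
    simp only [DDw, h0, h1, List.append_nil, Wword_getLast?, hdDelta,
      List.head?_nil, zero_sub, Nat.add_zero, Nat.succ_ne_zero, if_false,
      if_pos rfl, if_true]
    norm_num
    rcases Nat.even_or_odd m with hm | hm
    · have e1 : iC^[m] (0:ℂ) = 0 := by simp [iC_it, hm]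
      have e2 : iC^[m] (1:ℂ) = 1 := by simp [iC_it, hm]
      have e3 : ((-1:ℚ)) ^ (m+1) = -1 := (hm.add_one).neg_one_pow
      rw [e1, e2, e3]
      module
    · have hm' : ¬ Even m := Nat.not_even_iff_odd.mpr hm
      have e1 : iC^[m] (0:ℂ) = 1 := by simp [iC_it, hm']
      have e2 : iC^[m] (1:ℂ) = 0 := by simp [iC_it, hm']
      have e3 : ((-1:ℚ)) ^ (m+1) = 1 := by
        rw [pow_succ]
        simp [hm.neg_one_pow]
      rw [e1, e2, e3]
      module
  · simp only [Uel, UelM, map_add, LinearMap.add_apply, DDL_single]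
    simp only [DDw, Wword_head?, Wword_getLast?, hdDelta, Nat.succ_ne_zero,
      if_false]
    rcases Nat.even_or_odd m with hm | hm
    · have e1 : iC^[m] (0:ℂ) = 0 := by simp [iC_it, hm]
      have e2 : iC^[m] (1:ℂ) = 1 := by simp [iC_it, hm]
      have f1 : iC^[m+1] (0:ℂ) = 1 := by
        rw [Function.iterate_succ_apply', e1]; simp [iC]
      have f2 : iC^[m+1] (1:ℂ) = 0 := by
        rw [Function.iterate_succ_apply', e2]; simp [iC]
      have e3 : ((-1:ℚ)) ^ (m+1) = -1 := (hm.add_one).neg_one_pow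
      rw [e1, e2, e3, Wword_append' 0 1 (m+1) (n+1) f1,
        Wword_append' 1 0 (m+1) (n+1) f2]
      module
    · have hm' : ¬ Even m := Nat.not_even_iff_odd.mpr hm
      have e1 : iC^[m] (0:ℂ) = 1 := by simp [iC_it, hm']
      have e2 : iC^[m] (1:ℂ) = 0 := by simp [iC_it, hm']
      have f1 : iC^[m+1] (0:ℂ) = 0 := by
        rw [Function.iterate_succ_apply', e1]; simp [iC]
      have f2 : iC^[m+1] (1:ℂ) = 1 := by
        rw [Function.iterate_succ_apply', e2]; simp [iC]
      have e3 : ((-1:ℚ)) ^ (m+1) = 1 := by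
        rw [pow_succ]; simp [hm.neg_one_pow]
      rw [e1, e2, e3, Wword_append' 0 0 (m+1) (n+1) f1,
        Wword_append' 1 1 (m+1) (n+1) f2]
      module


end BlockShuffle
end
end

section
/- Let S ⊂ C be closed under z ↦ 1-z with 0, 1 ∈ S. For each word in A(S), define D as the derivation (with respect to concatenation) on A({0,1}) with D(e_a) = e_a e_a - e_a e_0 - e_1 e_a for a ∈ {0,1}; equivalently D(e_a) = -e_1 e_0. Then for any word w ∈ A({0,1}), D(w) = w * e_1 - w ⧢ e_1, where ⧢ is the shuffle product and * is the harmonic-type product on A({0,1}) satisfying e_{a_1}⋯e_{a_k} * e_1 = Σ_{i=1}^{k} e_{a_1}⋯e_{a_i} e_{a_i}⋯e_{a_k} - Σ_{i=1}^{k} e_{a_1}⋯e_{a_i} e_0 e_{a_{i+1}}⋯e_{a_k} + e_{a_1}⋯e_{a_k} e_1. -/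
noncomputable section
namespace BlockShuffle

/-- The shuffle product on basis words: `e_a u ⧢ e_b v = e_a(u ⧢ e_b v) + e_b(e_a u ⧢ v)`. -/
def shW : List ℂ → List ℂ → AA
  | [], v => wA v
  | u, [] => wA u
  | a :: u, b :: v => wA [a] * shW u (b :: v) + wA [b] * shW (a :: u) v
  termination_by u v => u.length + v.length

/-- The derivation `D` of `𝒜({0,1})` with respect to concatenation, determined by
`D(e_a) = e_a e_a - e_a e_0 - e_1 e_a`, evaluated on basis words. -/
def Dw : List ℂ → AA
  | [] => 0
  | a :: w => (wA [a, a] - wA [a, 0] - wA [1, a]) * wA w + wA [a] * Dw w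

/-- The harmonic-type product with `e₁`: `e_{a₁}⋯e_{a_k} * e₁ =
Σ_{i=1}^{k} e_{a₁}⋯e_{a_i} e_{a_i} e_{a_{i+1}}⋯e_{a_k}
- Σ_{i=1}^{k} e_{a₁}⋯e_{a_i} e_0 e_{a_{i+1}}⋯e_{a_k} + e_{a₁}⋯e_{a_k} e₁`. -/
def hstarW (w : List ℂ) : AA :=
  (∑ j ∈ Finset.range w.length, wA (w.take (j + 1) ++ w.getD j 0 :: w.drop (j + 1))) -
    (∑ j ∈ Finset.range w.length, wA (w.take (j + 1) ++ (0 : ℂ) :: w.drop (j + 1))) +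
    wA (w ++ [1])


lemma wA_mul (u v : List ℂ) : wA u * wA v = wA (u ++ v) := by
  simp [wA, MonoidAlgebra.single_mul_single, ← FreeMonoid.ofList_append]

lemma wA_cons (a : ℂ) (l : List ℂ) : wA (a :: l) = wA [a] * wA l := by
  rw [wA_mul]; rfl

lemma wA_cons_cons (a b : ℂ) (l : List ℂ) : wA (a :: b :: l) = wA [a] * wA (b :: l) :=
  wA_cons a _

lemma wA_cons_append (a : ℂ) (l l' : List ℂ) : wA (a :: (l ++ l')) = wA [a] * wA (l ++ l') :=
  wA_cons a _

lemma hstar_cons (a : ℂ) (u : List ℂ) :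
    hstarW (a :: u) = wA (a :: a :: u) - wA (a :: (0:ℂ) :: u) + wA [a] * hstarW u := by
  unfold hstarW
  rw [List.length_cons, Finset.sum_range_succ', Finset.sum_range_succ']
  simp only [List.take_succ_cons, List.getD_cons_succ, List.getD_cons_zero,
    List.drop_succ_cons, List.take_zero, List.drop_zero, List.cons_append, List.nil_append]
  simp only [wA_cons_cons, wA_cons_append, ← Finset.mul_sum, mul_sub, mul_add]
  abel

theorem D_eq_hstar_sub_shuffle' (w : List ℂ) :
    Dw w = hstarW w - shW w [1] := by
  induction w with
  | nil => simp [Dw, hstarW, shW]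
  | cons a u ih =>
    have h1 : shW (a :: u) [1] = wA [a] * shW u [1] + wA [1] * wA (a :: u) := by
      rw [shW, shW]
      simp
    rw [Dw, ih, hstar_cons, h1]
    simp only [wA_cons_cons]
    rw [wA_cons a u, wA_cons (0:ℂ) u]
    noncomm_ring

/-- `D(w) = w * e₁ - w ⧢ e₁` for every word `w` in `𝒜({0,1})`. -/
theorem D_eq_hstar_sub_shuffle (w : List ℂ) (hw : ∀ x ∈ w, x = 0 ∨ x = 1) :
    Dw w = hstarW w - shW w [1] := D_eq_hstar_sub_shuffle' w

end BlockShuffle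
end
end
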